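/- Let K and H be complex Hilbert spaces and let T : K → H be a nonzero bounded operator with closed range. If S : H → K is a bounded operator satisfying the Moore–Penrose equations TST = T, STS = S, (TS)* = TS and (ST)* = ST, then ‖S‖ = 1/γ(T). -/

import Mathlib

/-!
`S T` is the orthogonal projection onto `(ker T)ᗮ`, so `S η ⊥ ker T` and the distance from `S η`
to `ker T` is `‖S η‖`; as `T S` is an orthogonal projection, `‖T (S η)‖ ≤ ‖η‖`, and the ratio at
`S η` is at most `‖η‖ / ‖S η‖`, giving `‖S‖ ≤ 1 / γ(T)`. Conversely `ξ - S (T ξ) ∈ ker T`, so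
`dist(ξ, ker T) ≤ ‖S‖ ‖T ξ‖`, giving `1 / ‖S‖ ≤ γ(T)`.
-/

noncomputable section

/-- The reduced minimum modulus `γ(T)`. -/
def rmm {X Y : Type*} [NormedAddCommGroup X] [InnerProductSpace ℂ X]
    [NormedAddCommGroup Y] [InnerProductSpace ℂ Y] (T : X →L[ℂ] Y) : ℝ :=
  sInf ((fun ξ => ‖T ξ‖ / Metric.infDist ξ (LinearMap.ker (T : X →ₗ[ℂ] Y) : Set X)) ''
    {ξ : X | ξ ∉ LinearMap.ker (T : X →ₗ[ℂ] Y)})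

end

open Metric

theorem infDist_ker_le_norm_mul_norm_apply {𝕜 E F : Type*} [NontriviallyNormedField 𝕜]
    [NormedAddCommGroup E] [NormedSpace 𝕜 E] [NormedAddCommGroup F] [NormedSpace 𝕜 F]
    {T : E →L[𝕜] F} {S : F →L[𝕜] E} (h : T.comp (S.comp T) = T) (ξ : E) :
    infDist ξ (LinearMap.ker (T : E →ₗ[𝕜] F)) ≤ ‖S‖ * ‖T ξ‖ := by
  have hmem : ξ - S (T ξ) ∈ LinearMap.ker (T : E →ₗ[𝕜] F) := by
    simpa [sub_eq_zero] using (congr($h ξ)).symm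
  calc infDist ξ (LinearMap.ker (T : E →ₗ[𝕜] F))
      ≤ dist ξ (ξ - S (T ξ)) := infDist_le_dist_of_mem hmem
    _ = ‖S (T ξ)‖ := by simp
    _ ≤ ‖S‖ * ‖T ξ‖ := S.le_opNorm _

theorem Submodule.infDist_eq_norm_of_forall_inner_eq_zero {𝕜 E : Type*} [RCLike 𝕜]
    [NormedAddCommGroup E] [InnerProductSpace 𝕜 E] {K : Submodule 𝕜 E} {u : E}
    (h : ∀ w ∈ K, inner 𝕜 u w = 0) : infDist u K = ‖u‖ := by
  have := (K.norm_eq_iInf_iff_inner_eq_zero (u := u) K.zero_mem).2 (by simpa using h)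
  rw [infDist_eq_iInf]
  simpa [dist_eq_norm] using this.symm

section ReducedMinimumModulus

variable {X Y : Type*} [NormedAddCommGroup X] [InnerProductSpace ℂ X]
  [NormedAddCommGroup Y] [InnerProductSpace ℂ Y]

@[simp]
theorem rmm_zero : rmm (0 : X →L[ℂ] Y) = 0 := by
  simp [rmm]

theorem rmm_le_div {T : X →L[ℂ] Y} {ξ : X} (hξ : ξ ∉ LinearMap.ker (T : X →ₗ[ℂ] Y)) :
    rmm T ≤ ‖T ξ‖ / infDist ξ (LinearMap.ker (T : X →ₗ[ℂ] Y)) := by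
  refine csInf_le ⟨0, ?_⟩ ⟨ξ, hξ, rfl⟩
  rintro _ ⟨ξ, -, rfl⟩
  exact div_nonneg (norm_nonneg _) infDist_nonneg

theorem le_rmm {T : X →L[ℂ] Y} (hT : T ≠ 0) {c : ℝ}
    (h : ∀ ξ ∉ LinearMap.ker (T : X →ₗ[ℂ] Y),
      c ≤ ‖T ξ‖ / infDist ξ (LinearMap.ker (T : X →ₗ[ℂ] Y))) :
    c ≤ rmm T := by
  obtain ⟨ξ, hξ⟩ : ∃ ξ, T ξ ≠ 0 := by
    by_contra! h
    exact hT (ContinuousLinearMap.ext h)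
  refine le_csInf ⟨_, ξ, hξ, rfl⟩ ?_
  rintro _ ⟨ξ, hξ, rfl⟩
  exact h ξ hξ

theorem inv_norm_le_rmm {T : X →L[ℂ] Y} {S : Y →L[ℂ] X} (hT : T ≠ 0)
    (h1 : T.comp (S.comp T) = T) : ‖S‖⁻¹ ≤ rmm T := by
  refine le_rmm hT fun ξ hξ => ?_
  have hd : 0 < infDist ξ (LinearMap.ker (T : X →ₗ[ℂ] Y)) :=
    (T.isClosed_ker.notMem_iff_infDist_pos ⟨0, Submodule.zero_mem _⟩).1 hξ
  rw [le_div_iff₀ hd]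
  calc ‖S‖⁻¹ * infDist ξ (LinearMap.ker (T : X →ₗ[ℂ] Y)) ≤ ‖S‖⁻¹ * (‖S‖ * ‖T ξ‖) := by
        gcongr
        exact infDist_ker_le_norm_mul_norm_apply h1 ξ
    _ ≤ ‖T ξ‖ := inv_mul_left_le (norm_nonneg _)

end ReducedMinimumModulus

theorem norm_apply_apply_le {K H : Type*} [NormedAddCommGroup K] [InnerProductSpace ℂ K]
    [NormedAddCommGroup H] [InnerProductSpace ℂ H] [CompleteSpace H]
    {T : K →L[ℂ] H} {S : H →L[ℂ] K} (h1 : T.comp (S.comp T) = T)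
    (h3 : IsSelfAdjoint (T.comp S)) (y : H) : ‖T (S y)‖ ≤ ‖y‖ := by
  have hproj : IsStarProjection (T.comp S) :=
    ⟨by ext y; simpa using congr($h1 (S y)), h3⟩
  simpa using (T.comp S).le_of_opNorm_le hproj.norm_le y

theorem infDist_ker_apply_eq_norm {K H : Type*} [NormedAddCommGroup K] [InnerProductSpace ℂ K]
    [CompleteSpace K] [NormedAddCommGroup H] [InnerProductSpace ℂ H]
    {T : K →L[ℂ] H} {S : H →L[ℂ] K} (h2 : S.comp (T.comp S) = S)
    (h4 : IsSelfAdjoint (S.comp T)) (y : H) :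
    infDist (S y) (LinearMap.ker (T : K →ₗ[ℂ] H)) = ‖S y‖ := by
  refine Submodule.infDist_eq_norm_of_forall_inner_eq_zero fun n hn => ?_
  calc inner ℂ (S y) n = inner ℂ (S.comp T (S y)) n := by simpa using congr(inner ℂ ($h2 y) n).symm
    _ = inner ℂ (S y) (S.comp T n) := h4.isSymmetric _ _
    _ = 0 := by simp [show T n = 0 from hn]

theorem rmm_mul_norm_apply_le {K H : Type*} [NormedAddCommGroup K] [InnerProductSpace ℂ K]
    [CompleteSpace K] [NormedAddCommGroup H] [InnerProductSpace ℂ H] [CompleteSpace H]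
    {T : K →L[ℂ] H} {S : H →L[ℂ] K} (h1 : T.comp (S.comp T) = T) (h2 : S.comp (T.comp S) = S)
    (h3 : IsSelfAdjoint (T.comp S)) (h4 : IsSelfAdjoint (S.comp T)) (y : H) :
    rmm T * ‖S y‖ ≤ ‖y‖ := by
  by_cases hy : S y = 0
  · simp [hy]
  have hker : S y ∉ LinearMap.ker (T : K →ₗ[ℂ] H) := fun h => hy <| by
    simpa [show T (S y) = 0 from h] using congr($h2 y).symm
  calc rmm T * ‖S y‖
      ≤ ‖T (S y)‖ / infDist (S y) (LinearMap.ker (T : K →ₗ[ℂ] H)) * ‖S y‖ := by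
        gcongr
        exact rmm_le_div hker
    _ = ‖T (S y)‖ := by
        rw [infDist_ker_apply_eq_norm h2 h4, div_mul_cancel₀ _ (norm_ne_zero_iff.2 hy)]
    _ ≤ ‖y‖ := norm_apply_apply_le h1 h3 y

theorem stmt_10_general (K H : Type)
    [NormedAddCommGroup K] [InnerProductSpace ℂ K] [CompleteSpace K]
    [NormedAddCommGroup H] [InnerProductSpace ℂ H] [CompleteSpace H]
    (T : K →L[ℂ] H)
    (S : H →L[ℂ] K)
    (h1 : T.comp (S.comp T) = T) (h2 : S.comp (T.comp S) = S)
    (h3 : IsSelfAdjoint (T.comp S)) (h4 : IsSelfAdjoint (S.comp T)) :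
    ‖S‖ = 1 / rmm T := by
  rcases eq_or_ne T 0 with rfl | hT
  · -- `S = S ∘ 0 ∘ S = 0`, and `rmm 0 = sInf ∅ = 0 = 1 / 0`
    have hS : S = 0 := by simpa using h2.symm
    simp [hS]
  have hS : 0 < ‖S‖ := norm_pos_iff.2 fun hS => hT (by simpa [hS] using h1.symm)
  have hlow : ‖S‖⁻¹ ≤ rmm T := inv_norm_le_rmm hT h1
  have hpos : 0 < rmm T := (inv_pos.2 hS).trans_le hlow
  have hup : ‖S‖ ≤ (rmm T)⁻¹ := S.opNorm_le_bound (inv_nonneg.2 hpos.le) fun y => by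
    rw [inv_mul_eq_div, le_div_iff₀ hpos, mul_comm]
    exact rmm_mul_norm_apply_le h1 h2 h3 h4 y
  rw [one_div]
  exact hup.antisymm (inv_le_of_inv_le₀ hS hlow)

theorem stmt_10 (K H : Type)
    [NormedAddCommGroup K] [InnerProductSpace ℂ K] [CompleteSpace K]
    [NormedAddCommGroup H] [InnerProductSpace ℂ H] [CompleteSpace H]
    (T : K →L[ℂ] H) (hT : T ≠ 0) (hcl : IsClosed (LinearMap.range (T : K →ₗ[ℂ] H) : Set H))
    (S : H →L[ℂ] K)
    (h1 : T.comp (S.comp T) = T) (h2 : S.comp (T.comp S) = S)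
    (h3 : IsSelfAdjoint (T.comp S)) (h4 : IsSelfAdjoint (S.comp T)) :
    ‖S‖ = 1 / rmm T :=
  stmt_10_general K H T S h1 h2 h3 h4
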